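/- Let d ≥ 2, t > 0 and x ∈ ℝ^d₊. Then ∫_{ℝ^d₊} |(∇_x + ∇_y) H(x,y,t)| dy = (πt)^{−1/2} e^{−x_d²/(4t)}, where (∇_x + ∇_y)H denotes the vector with components (∂_{x_i} + ∂_{y_i})H, i = 1,…,d. -/

import Mathlib

open MeasureTheory Real Set

/-- One-dimensional Gaussian heat kernel `G_t(ξ) = (4πt)^{−1/2} e^{−ξ²/(4t)}`. -/
noncomputable def G1 (t ξ : ℝ) : ℝ := (4 * π * t) ^ (-(1 : ℝ) / 2) * Real.exp (-ξ ^ 2 / (4 * t))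

/-- `(d−1)`-dimensional Gaussian heat kernel (here `d = n+2`, so `d−1 = n+1`):
`G_t^{(d−1)}(v) = (4πt)^{−(d−1)/2} e^{−|v|²/(4t)}`. -/
noncomputable def Gtan (n : ℕ) (t : ℝ) (v : Fin (n + 1) → ℝ) : ℝ :=
  (4 * π * t) ^ (-((n : ℝ) + 1) / 2) * Real.exp (-(∑ i, (v i) ^ 2) / (4 * t))

/-- Half-space Dirichlet heat kernel in dimension `d = n+2`:
`H(x,y,t) = G_t^{(d−1)}(x'−y') (G_t(x_d−y_d) − G_t(x_d+y_d))`. -/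
noncomputable def H (n : ℕ) (t : ℝ) (x y : Fin (n + 2) → ℝ) : ℝ :=
  Gtan n t (fun i => x i.castSucc - y i.castSucc) *
    (G1 t (x (Fin.last (n + 1)) - y (Fin.last (n + 1))) -
      G1 t (x (Fin.last (n + 1)) + y (Fin.last (n + 1))))

/-- Component `i` of the vector `(∇_x + ∇_y) H(x,y,t)`. -/
noncomputable def D1 (n : ℕ) (t : ℝ) (i : Fin (n + 2)) (x y : Fin (n + 2) → ℝ) : ℝ :=
  deriv (fun s => H n t (Function.update x i s) y) (x i) +
    deriv (fun s => H n t x (Function.update y i s)) (y i)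

open Filter Topology

/-! The kernel depends on `x'` and `y'` only through `x' − y'`, so the tangential components
of `(∇_x + ∇_y)H` vanish. In the normal direction `∂_{x_d} + ∂_{y_d}` kills `G_t(x_d − y_d)` and
doubles the derivative of the reflected term, leaving `−2 G_t'(x_d + y_d) G_t^{(d−1)}(x' − y') ≥ 0`.
The integrand therefore factors: the tangential Gaussian has mass `1`, and
`∫_0^∞ −2 G_t'(x_d + s) ds = 2 G_t(x_d)`. -/

lemma G1_nonneg {t : ℝ} (ht : 0 < t) (ξ : ℝ) : 0 ≤ G1 t ξ := by
  unfold G1; positivity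

lemma Gtan_nonneg (n : ℕ) {t : ℝ} (ht : 0 < t) (v : Fin (n + 1) → ℝ) : 0 ≤ Gtan n t v := by
  unfold Gtan; positivity

lemma hasDerivAt_G1 {t : ℝ} (ht : 0 < t) (ξ : ℝ) :
    HasDerivAt (G1 t) (-(ξ / (2 * t)) * G1 t ξ) ξ := by
  have hexponent : HasDerivAt (fun ξ : ℝ => -ξ ^ 2 / (4 * t)) (-(2 * ξ) / (4 * t)) ξ := by
    simpa using (hasDerivAt_pow 2 ξ).neg.div_const (4 * t)
  refine (hexponent.exp.const_mul ((4 * π * t) ^ (-(1 : ℝ) / 2))).congr_deriv ?_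
  unfold G1
  field_simp
  ring

lemma deriv_G1 {t : ℝ} (ht : 0 < t) : deriv (G1 t) = fun ξ => -(ξ / (2 * t)) * G1 t ξ :=
  funext fun ξ => (hasDerivAt_G1 ht ξ).deriv

lemma tendsto_G1_atTop {t : ℝ} (ht : 0 < t) : Tendsto (G1 t) atTop (𝓝 0) := by
  have h : Tendsto (fun ξ : ℝ => -ξ ^ 2 / (4 * t)) atTop atBot :=
    (tendsto_neg_atBot_iff.mpr (tendsto_pow_atTop two_ne_zero)).atBot_div_const (by positivity)
  unfold G1
  simpa using (tendsto_exp_atBot.comp h).const_mul ((4 * π * t) ^ (-(1 : ℝ) / 2))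

lemma integral_G1 {t : ℝ} (ht : 0 < t) : ∫ ξ, G1 t ξ = 1 := by
  have h4πt : 0 < 4 * π * t := by positivity
  have hexponent : ∀ ξ : ℝ, -ξ ^ 2 / (4 * t) = -(4 * t)⁻¹ * ξ ^ 2 := fun ξ => by ring
  simp_rw [G1, integral_const_mul, hexponent, integral_gaussian, div_inv_eq_mul, sqrt_eq_rpow]
  rw [show π * (4 * t) = 4 * π * t by ring, ← rpow_add h4πt]
  norm_num

lemma Gtan_eq_prod_G1 (n : ℕ) {t : ℝ} (ht : 0 < t) (v : Fin (n + 1) → ℝ) :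
    Gtan n t v = ∏ j, G1 t (v j) := by
  simp only [Gtan, G1, Finset.prod_mul_distrib, Finset.prod_const, Finset.card_univ,
    Fintype.card_fin, ← exp_sum, ← Finset.sum_div, Finset.sum_neg_distrib]
  rw [← rpow_mul_natCast (by positivity)]
  push_cast
  ring_nf

lemma integral_Gtan (n : ℕ) {t : ℝ} (ht : 0 < t) : ∫ v, Gtan n t v = 1 := by
  simp_rw [Gtan_eq_prod_G1 n ht]
  rw [integral_fintype_prod_volume_eq_prod (f := fun _ => G1 t)]
  simp [integral_G1 ht]

lemma deriv_comp_sub_sub_comp_add_add {f g : ℝ → ℝ} (hf : Differentiable ℝ f)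
    (hg : Differentiable ℝ g) (a b : ℝ) :
    deriv (fun s => f (s - b) - g (s + b)) a + deriv (fun s => f (a - s) - g (a + s)) b =
      -2 * deriv g (a + b) := by
  rw [deriv_fun_sub (by fun_prop) (by fun_prop), deriv_fun_sub (by fun_prop) (by fun_prop),
    deriv_comp_sub_const, deriv_comp_add_const, deriv_comp_const_sub, deriv_comp_const_add]
  ring

section D1

variable {n : ℕ} {t : ℝ} (x y : Fin (n + 2) → ℝ)

lemma H_update_castSucc_right (j : Fin (n + 1)) (s : ℝ) :
    H n t x (Function.update y j.castSucc s) =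
      H n t (Function.update x j.castSucc (x j.castSucc + y j.castSucc - s)) y := by
  simp only [H, Function.update_of_ne (Fin.castSucc_lt_last j).ne']
  congr 2
  funext i
  by_cases hij : i = j
  · subst hij
    simp only [Function.update_self]
    ring
  · simp only [Function.update_of_ne (Fin.castSucc_injective _ |>.ne hij)]

lemma D1_castSucc (j : Fin (n + 1)) : D1 n t j.castSucc x y = 0 := by
  set φ := fun r => H n t (Function.update x j.castSucc r) y
  have hright : (fun s => H n t x (Function.update y j.castSucc s)) =
      fun s => φ (x j.castSucc + y j.castSucc - s) :=
    funext (H_update_castSucc_right x y j)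
  rw [D1, hright, deriv_comp_const_sub, add_sub_cancel_right, add_neg_cancel]

lemma H_update_last_left (s : ℝ) :
    H n t (Function.update x (Fin.last (n + 1)) s) y =
      Gtan n t (fun k => x k.castSucc - y k.castSucc) *
        (G1 t (s - y (Fin.last (n + 1))) - G1 t (s + y (Fin.last (n + 1)))) := by
  simp only [H, Function.update_self, Function.update_of_ne (Fin.castSucc_lt_last _).ne]

lemma H_update_last_right (s : ℝ) :
    H n t x (Function.update y (Fin.last (n + 1)) s) =
      Gtan n t (fun k => x k.castSucc - y k.castSucc) *
        (G1 t (x (Fin.last (n + 1)) - s) - G1 t (x (Fin.last (n + 1)) + s)) := by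
  simp only [H, Function.update_self, Function.update_of_ne (Fin.castSucc_lt_last _).ne]

lemma D1_last (ht : 0 < t) :
    D1 n t (Fin.last (n + 1)) x y =
      Gtan n t (fun k => x k.castSucc - y k.castSucc) *
        ((x (Fin.last (n + 1)) + y (Fin.last (n + 1))) / t *
          G1 t (x (Fin.last (n + 1)) + y (Fin.last (n + 1)))) := by
  have hG1 : Differentiable ℝ (G1 t) := fun ξ => (hasDerivAt_G1 ht ξ).differentiableAt
  simp only [D1, H_update_last_left, H_update_last_right, deriv_const_mul_field']
  rw [← mul_add, deriv_comp_sub_sub_comp_add_add hG1 hG1, deriv_G1 ht]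
  field_simp

lemma sqrt_sum_sq_D1 (ht : 0 < t) (hxy : 0 ≤ x (Fin.last (n + 1)) + y (Fin.last (n + 1))) :
    √(∑ i, D1 n t i x y ^ 2) =
      Gtan n t (fun k => x k.castSucc - y k.castSucc) *
        ((x (Fin.last (n + 1)) + y (Fin.last (n + 1))) / t *
          G1 t (x (Fin.last (n + 1)) + y (Fin.last (n + 1)))) := by
  simp only [Fin.sum_univ_castSucc, D1_castSucc, ne_eq, OfNat.ofNat_ne_zero,
    not_false_eq_true, zero_pow, Finset.sum_const_zero, zero_add, D1_last x y ht]
  have := Gtan_nonneg n ht (fun k => x k.castSucc - y k.castSucc)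
  have := G1_nonneg ht (x (Fin.last (n + 1)) + y (Fin.last (n + 1)))
  exact sqrt_sq (by positivity)

end D1

lemma integral_Ioi_mul_G1_add {t b : ℝ} (ht : 0 < t) (hb : 0 ≤ b) :
    ∫ s in Ioi 0, (b + s) / t * G1 t (b + s) = 2 * G1 t b := by
  have hderiv : ∀ s ∈ Ici (0 : ℝ),
      HasDerivAt (fun s => -2 * G1 t (b + s)) ((b + s) / t * G1 t (b + s)) s := by
    intro s _
    refine (((hasDerivAt_G1 ht (b + s)).comp s ((hasDerivAt_id s).const_add b)).const_mul
      (-2)).congr_deriv ?_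
    field_simp
  have hnonneg : ∀ s ∈ Ioi (0 : ℝ), 0 ≤ (b + s) / t * G1 t (b + s) := fun s hs => by
    have := G1_nonneg ht (b + s)
    have : 0 < s := hs
    positivity
  have hlim : Tendsto (fun s => -2 * G1 t (b + s)) atTop (𝓝 0) := by
    simpa using ((tendsto_G1_atTop ht).comp
      (tendsto_atTop_add_const_left _ b tendsto_id)).const_mul (-2)
  rw [integral_Ioi_of_hasDerivAt_of_nonneg' hderiv hnonneg hlim]
  simp

lemma setIntegral_last_mem_mul {n : ℕ} (s : Set ℝ) (f : (Fin n → ℝ) → ℝ) (g : ℝ → ℝ) :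
    ∫ y in {y : Fin (n + 1) → ℝ | y (Fin.last n) ∈ s},
        f (fun j => y j.castSucc) * g (y (Fin.last n)) =
      (∫ r in s, g r) * ∫ v, f v := by
  let e := MeasurableEquiv.piFinSuccAbove (fun _ : Fin (n + 1) => ℝ) (Fin.last n)
  have hset : {y : Fin (n + 1) → ℝ | y (Fin.last n) ∈ s} = e ⁻¹' (s ×ˢ univ) := by
    ext y
    simp [e, MeasurableEquiv.piFinSuccAbove, Fin.insertNthEquiv]
  have hfun : ∀ y : Fin (n + 1) → ℝ,
      f (fun j => y j.castSucc) * g (y (Fin.last n)) = g (e y).1 * f (e y).2 := by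
    intro y
    change _ = g (y (Fin.last n)) * f (fun j => y ((Fin.last n).succAbove j))
    rw [mul_comm]
    simp only [Fin.succAbove_last]
  simp_rw [hset, hfun]
  rw [(volume_preserving_piFinSuccAbove (fun _ => ℝ) (Fin.last n)).setIntegral_preimage_emb
      e.measurableEmbedding (fun p => g p.1 * f p.2),
    Measure.volume_eq_prod, ← Measure.prod_restrict, Measure.restrict_univ, integral_prod_mul]

lemma two_mul_G1 {t : ℝ} (ht : 0 < t) (ξ : ℝ) :
    2 * G1 t ξ = (π * t) ^ (-(1 : ℝ) / 2) * exp (-ξ ^ 2 / (4 * t)) := by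
  have hfour : (4 : ℝ) ^ (-(1 : ℝ) / 2) = 2⁻¹ := by
    rw [show (4 : ℝ) = 2 ^ (2 : ℝ) by norm_num, ← rpow_mul (by norm_num)]
    norm_num
  rw [G1, mul_assoc 4, mul_rpow (by norm_num) (by positivity), hfour]
  ring

/-- For `d = n+2 ≥ 2`, `t > 0` and `x` in the half space:
`∫_{ℝ^d₊} |(∇_x + ∇_y) H(x,y,t)| dy = (πt)^{−1/2} e^{−x_d²/(4t)}`. -/
theorem stmt_6 (n : ℕ) (t : ℝ) (ht : 0 < t) (x : Fin (n + 2) → ℝ)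
    (hx : 0 < x (Fin.last (n + 1))) :
    (∫ y in {y : Fin (n + 2) → ℝ | 0 < y (Fin.last (n + 1))},
        Real.sqrt (∑ i, (D1 n t i x y) ^ 2)) =
      (π * t) ^ (-(1 : ℝ) / 2) * Real.exp (-(x (Fin.last (n + 1))) ^ 2 / (4 * t)) := by
  have hD1 : EqOn (fun y => √(∑ i, D1 n t i x y ^ 2))
      (fun y => Gtan n t (fun k => x k.castSucc - y k.castSucc) *
        ((x (Fin.last (n + 1)) + y (Fin.last (n + 1))) / t *
          G1 t (x (Fin.last (n + 1)) + y (Fin.last (n + 1)))))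
      {y | 0 < y (Fin.last (n + 1))} :=
    fun y hy => sqrt_sum_sq_D1 x y ht (add_pos hx hy).le
  have hGtan : ∫ v : Fin (n + 1) → ℝ, Gtan n t (fun k => x k.castSucc - v k) = 1 :=
    (integral_sub_left_eq_self (Gtan n t) volume _).trans (integral_Gtan n ht)
  rw [setIntegral_congr_fun (measurableSet_lt measurable_const (measurable_pi_apply _)) hD1]
  change ∫ y in {y : Fin (n + 2) → ℝ | y (Fin.last (n + 1)) ∈ Ioi 0}, _ = _
  rw [setIntegral_last_mem_mul (Ioi 0) (fun v => Gtan n t (fun k => x k.castSucc - v k))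
      (fun r => (x (Fin.last (n + 1)) + r) / t * G1 t (x (Fin.last (n + 1)) + r)),
    integral_Ioi_mul_G1_add ht hx.le, hGtan, mul_one, two_mul_G1 ht]
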